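/- arXiv:1103.2774 — 3 statements merged into one kernel-verified Lean document; each statement's English description precedes it below -/
import Mathlib

section
/- Let π, σ ∈ ℝ^n be unit vectors with strictly positive entries, γ > 0, ε_k = min(π_k, γσ_k), and suppose p := (σᵀ·ε / ‖ε‖₂)² satisfies p ≥ (σᵀ·ε)/γ (equivalently ‖ε‖₂² ≤ γ σᵀ·ε, which holds since ε_k ≤ γσ_k). Then (σᵀ·ε) · (∑_{k=1}^n σ_k π_k² / ε_k) ≤ p. -/
/-!
Whichever of `π k`, `γ * σ k` the minimum `ε k` picks, `σ k * π k ^ 2 / ε k` equals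
`σ k * ε k + (π k ^ 2 - ε k ^ 2) / γ`, so with `S = σᵀε` and `E = ‖ε‖²` the product is
`S * (S + (1 - E) / γ) = p * E + (S / γ) * (1 - E)`: a convex combination of `p` and `S / γ ≤ p`.
-/

open Finset

lemma mul_sq_div_min_eq {a b γ : ℝ} (hγ : γ ≠ 0) (hb : b ≠ 0) :
    b * a ^ 2 / min a (γ * b) = b * min a (γ * b) + (a ^ 2 - min a (γ * b) ^ 2) / γ := by
  rcases le_total a (γ * b) with h | h
  · rw [min_eq_left h, sub_self, zero_div, add_zero]
    rcases eq_or_ne a 0 with rfl | ha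
    · simp
    · field_simp
  · rw [min_eq_right h]
    field_simp
    ring

lemma mul_add_one_sub_div_le_sq_div {S E γ : ℝ} (hE₀ : 0 < E) (hE₁ : E ≤ 1)
    (hSγ : S / γ ≤ S ^ 2 / E) :
    S * (S + (1 - E) / γ) ≤ S ^ 2 / E :=
  calc S * (S + (1 - E) / γ) = S ^ 2 / E * E + S / γ * (1 - E) := by
        rw [div_mul_cancel₀ _ hE₀.ne']; ring
    _ ≤ S ^ 2 / E * E + S ^ 2 / E * (1 - E) := by gcongr
    _ = S ^ 2 / E := by ring

section WaterFill

variable {ι : Type*} (π σ : ι → ℝ) (γ : ℝ)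

def waterFill (k : ι) : ℝ := min (π k) (γ * σ k)

variable {π σ γ}

lemma waterFill_pos (hπ : ∀ k, 0 < π k) (hσ : ∀ k, 0 < σ k) (hγ : 0 < γ) (k : ι) :
    0 < waterFill π σ γ k :=
  lt_min (hπ k) (mul_pos hγ (hσ k))

lemma sum_sq_waterFill_le [Fintype ι] (hπ : ∀ k, 0 ≤ π k) (hσ : ∀ k, 0 ≤ σ k) (hγ : 0 ≤ γ) :
    ∑ k, waterFill π σ γ k ^ 2 ≤ ∑ k, π k ^ 2 :=
  sum_le_sum fun k _ =>
    pow_le_pow_left₀ (le_min (hπ k) (mul_nonneg hγ (hσ k))) (min_le_left _ _) 2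

lemma sum_mul_sq_div_waterFill [Fintype ι] (hγ : γ ≠ 0) (hσ : ∀ k, σ k ≠ 0) (hπ : ∑ k, π k ^ 2 = 1) :
    ∑ k, σ k * π k ^ 2 / waterFill π σ γ k =
      ∑ k, σ k * waterFill π σ γ k + (1 - ∑ k, waterFill π σ γ k ^ 2) / γ := by
  rw [← hπ, ← sum_sub_distrib, sum_div, ← sum_add_distrib]
  exact sum_congr rfl fun k _ => mul_sq_div_min_eq hγ (hσ k)

end WaterFill

theorem stmt_7_general (n : ℕ) (π σ : Fin n → ℝ)
    (hπ : ∑ k, (π k) ^ 2 = 1)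
    (hπpos : ∀ k, 0 < π k) (hσpos : ∀ k, 0 < σ k)
    (γ : ℝ) (hγ : 0 < γ) (ε : Fin n → ℝ) (hε : ∀ k, ε k = min (π k) (γ * σ k))
    (p : ℝ) (hp : p = (∑ k, σ k * ε k) ^ 2 / (∑ k, (ε k) ^ 2))
    (hpγ : (∑ k, σ k * ε k) / γ ≤ p) :
    (∑ k, σ k * ε k) * (∑ k, σ k * (π k) ^ 2 / ε k) ≤ p := by
  obtain rfl : ε = waterFill π σ γ := funext hε
  have : Nonempty (Fin n) := by
    rcases isEmpty_or_nonempty (Fin n) with h | h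
    · simp at hπ
    · exact h
  have hE₀ : 0 < ∑ k, waterFill π σ γ k ^ 2 :=
    sum_pos (fun k _ => pow_pos (waterFill_pos hπpos hσpos hγ k) 2) univ_nonempty
  have hE₁ : ∑ k, waterFill π σ γ k ^ 2 ≤ 1 :=
    hπ ▸ sum_sq_waterFill_le (fun k => (hπpos k).le) (fun k => (hσpos k).le) hγ.le
  rw [sum_mul_sq_div_waterFill hγ.ne' (fun k => (hσpos k).ne') hπ]
  subst hp
  exact mul_add_one_sub_div_le_sq_div hE₀ hE₁ hpγ

theorem stmt_7 (n : ℕ) (π σ : Fin n → ℝ)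
    (hπ : ∑ k, (π k) ^ 2 = 1) (hσ : ∑ k, (σ k) ^ 2 = 1)
    (hπpos : ∀ k, 0 < π k) (hσpos : ∀ k, 0 < σ k)
    (γ : ℝ) (hγ : 0 < γ) (ε : Fin n → ℝ) (hε : ∀ k, ε k = min (π k) (γ * σ k))
    (p : ℝ) (hp : p = (∑ k, σ k * ε k) ^ 2 / (∑ k, (ε k) ^ 2))
    (hpγ : (∑ k, σ k * ε k) / γ ≤ p) :
    (∑ k, σ k * ε k) * (∑ k, σ k * (π k) ^ 2 / ε k) ≤ p :=
  stmt_7_general n π σ hπ hπpos hσpos γ hγ ε hε p hp hpγ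
end

section
/- Let θ ∈ (0, π/2], set t̃ = ⌈π/(4θ) − 1/2⌉ and θ̃ = π/(2(2t̃+1)). Then 1/2 ≤ sin(θ̃)/sin(θ) ≤ 1. -/
/-!
Write `n = ⌈π / (4θ) - 1/2⌉₊` and `θ̃ = π / (4n + 2)`. The choice of `n` gives `θ̃ ≤ θ`, so the
upper bound is monotonicity of `sin` on `[0, π/2]`. For the lower bound, if `n ≤ 1` then
`θ̃ ∈ {π/2, π/6}` and `sin θ̃ ≥ 1/2 ≥ sin θ / 2`. If `n ≥ 2`, minimality of the ceiling gives
`(4n - 2) θ < π`, hence `θ / 2 ≤ θ̃`, and concavity of `sin` on `[0, π]` (i.e. `sin x / x` is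
antitone there) gives `sin θ̃ / sin θ ≥ θ̃ / θ ≥ 1/2`.
-/

open Real

lemma mul_sin_le_mul_sin {x y : ℝ} (hx : 0 ≤ x) (hxy : x ≤ y) (hy : y ≤ π) :
    x * sin y ≤ y * sin x := by
  rcases (hx.trans hxy).eq_or_lt with rfl | hy₀
  · simp
  have hconc : (1 - x / y) • sin 0 + (x / y) • sin y ≤ sin ((1 - x / y) • 0 + (x / y) • y) :=
    strictConcaveOn_sin_Icc.concaveOn.2 ⟨le_rfl, pi_pos.le⟩ ⟨hy₀.le, hy⟩
      (by rw [sub_nonneg, div_le_one hy₀]; exact hxy) (by positivity) (by ring)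
  simp only [smul_eq_mul, sin_zero, mul_zero, zero_add, div_mul_cancel₀ x hy₀.ne'] at hconc
  rwa [div_mul_eq_mul_div, div_le_iff₀ hy₀, mul_comm (sin x)] at hconc

lemma half_le_sin_pi_div_of_le_one {n : ℕ} (hn : n ≤ 1) :
    1 / 2 ≤ sin (π / (2 * (2 * n + 1))) := by
  interval_cases n
  · norm_num
  · norm_num [show π / (2 * (2 + 1)) = π / 6 by ring]

lemma pi_le_mul_ceil {θ : ℝ} (hθ : 0 < θ) :
    π ≤ (4 * ⌈π / (4 * θ) - 1 / 2⌉₊ + 2) * θ := by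
  have h := Nat.le_ceil (π / (4 * θ) - 1 / 2)
  rw [sub_le_iff_le_add, div_le_iff₀ (by positivity)] at h
  linarith

lemma mul_ceil_lt_pi {θ : ℝ} (hθ : 0 < θ) (hn : 0 < ⌈π / (4 * θ) - 1 / 2⌉₊) :
    (4 * ⌈π / (4 * θ) - 1 / 2⌉₊ - 2) * θ < π := by
  have h := Nat.ceil_lt_add_one (Nat.ceil_pos.1 hn).le
  have h' : (⌈π / (4 * θ) - 1 / 2⌉₊ - 1 / 2 : ℝ) * (4 * θ) < π :=
    (lt_div_iff₀ (by positivity)).1 (by linarith)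
  linarith

theorem stmt_13 (θ : ℝ) (hθ : 0 < θ) (hθ' : θ ≤ Real.pi / 2) :
    1 / 2 ≤ Real.sin (Real.pi / (2 * (2 * (⌈Real.pi / (4 * θ) - 1 / 2⌉₊ : ℝ) + 1)))
            / Real.sin θ ∧
    Real.sin (Real.pi / (2 * (2 * (⌈Real.pi / (4 * θ) - 1 / 2⌉₊ : ℝ) + 1)))
            / Real.sin θ ≤ 1 := by
  set n := ⌈π / (4 * θ) - 1 / 2⌉₊
  set θ' := π / (2 * (2 * (n : ℝ) + 1))
  have hpos : 0 < 2 * (2 * (n : ℝ) + 1) := by positivity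
  have hθ'_pos : 0 < θ' := by positivity
  have hθ'_le : θ' ≤ θ := (div_le_iff₀ hpos).2 (by linarith [pi_le_mul_ceil hθ])
  have hsin : 0 < sin θ := sin_pos_of_pos_of_lt_pi hθ (by linarith [pi_pos])
  refine ⟨?_, (div_le_one hsin).2 <|
    sin_le_sin_of_le_of_le_pi_div_two (by linarith) hθ' hθ'_le⟩
  rw [le_div_iff₀ hsin]
  rcases le_or_gt n 1 with hn₁ | hn₂
  · linarith [half_le_sin_pi_div_of_le_one hn₁, sin_le_one θ]
  · have hhalf : θ / 2 ≤ θ' := by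
      rw [le_div_iff₀ hpos]
      have : (2 : ℝ) ≤ n := by exact_mod_cast hn₂
      nlinarith [mul_ceil_lt_pi hθ (by omega)]
    have hconc := mul_sin_le_mul_sin hθ'_pos.le hθ'_le (by linarith [pi_pos])
    nlinarith
end

section
/- Let γ ↦ ε(γ) be defined by ε(γ)_k = min(π_k, γσ_k) for unit vectors π, σ ∈ ℝ^n with strictly positive entries. Then the map γ ↦ ‖ε(γ)‖₂ is monotonically nondecreasing on (0, ∞), and the map γ ↦ p(γ) := (σᵀ·ε(γ)/‖ε(γ)‖₂)² is monotonically nonincreasing on [γ_min, γ_max], where γ_min = min_k π_k/σ_k and γ_max = max_k π_k/σ_k. -/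
/-!
Write `a = ε(γ₁)` and `b = ε(γ₂)` for `γ₁ ≤ γ₂`. Raising the water level only moves coordinates
where `a` already equals `γ₁σ`, so `⟪a, b - a⟫ = γ₁ ⟪σ, b - a⟫`, while `a ≤ γ₁σ` gives
`‖a‖² ≤ γ₁ ⟪σ, a⟫`. Expanding `⟪σ, b⟫² ‖a‖² ≤ ⟪σ, a⟫² ‖b‖²` with these two facts, the only
nonlinear term left is controlled by Cauchy–Schwarz applied to `⟪a, b - a⟫`.
-/

open Finset

/-- Read `f = ⟪σ, a⟫`, `G = ‖a‖²`, `D = ⟪σ, b - a⟫`, `T = ‖b - a‖²`, `γ` the lower level. -/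
lemma sq_add_div_le_sq_div {f G D T γ : ℝ} (hγ : 0 < γ) (hD : 0 ≤ D) (hT : 0 ≤ T) (hG : 0 < G)
    (hGf : G ≤ γ * f) (hCS : (γ * D) ^ 2 ≤ G * T) :
    (f + D) ^ 2 / (G + 2 * γ * D + T) ≤ f ^ 2 / G := by
  have hf : 0 ≤ f := nonneg_of_mul_nonneg_right (hG.le.trans hGf) hγ
  have hcross : f * D * G ≤ f * D * (γ * f) := mul_le_mul_of_nonneg_left hGf (by positivity)
  have hquad : D ^ 2 * G ≤ f ^ 2 * T := by
    refine le_of_mul_le_mul_left ?_ (pow_pos hγ 2)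
    calc γ ^ 2 * (D ^ 2 * G) = (γ * D) ^ 2 * G := by ring
      _ ≤ G * T * G := mul_le_mul_of_nonneg_right hCS hG.le
      _ = G ^ 2 * T := by ring
      _ ≤ (γ * f) ^ 2 * T := mul_le_mul_of_nonneg_right (pow_le_pow_left₀ hG.le hGf 2) hT
      _ = γ ^ 2 * (f ^ 2 * T) := by ring
  rw [div_le_div_iff₀ (by positivity) hG]
  linear_combination 2 * hcross + hquad

lemma sq_sum_mul_div_sum_sq_le {ι : Type*} [Fintype ι] {σ a b : ι → ℝ} {γ : ℝ} (hγ : 0 < γ)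
    (hσ : ∀ k, 0 ≤ σ k) (ha : ∀ k, 0 ≤ a k) (hab : ∀ k, a k ≤ b k) (haσ : ∀ k, a k ≤ γ * σ k)
    (hmove : ∀ k, a k * (b k - a k) = γ * σ k * (b k - a k)) (hapos : 0 < ∑ k, a k ^ 2) :
    (∑ k, σ k * b k) ^ 2 / ∑ k, b k ^ 2 ≤ (∑ k, σ k * a k) ^ 2 / ∑ k, a k ^ 2 := by
  have hinner : ∑ k, σ k * b k = ∑ k, σ k * a k + ∑ k, σ k * (b k - a k) := by
    rw [← sum_add_distrib]; exact sum_congr rfl fun k _ => by ring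
  have hnorm : ∑ k, b k ^ 2
      = ∑ k, a k ^ 2 + 2 * γ * ∑ k, σ k * (b k - a k) + ∑ k, (b k - a k) ^ 2 := by
    rw [mul_sum, ← sum_add_distrib, ← sum_add_distrib]
    refine sum_congr rfl fun k _ => ?_
    linear_combination 2 * hmove k
  have hGf : ∑ k, a k ^ 2 ≤ γ * ∑ k, σ k * a k := by
    rw [mul_sum]
    refine sum_le_sum fun k _ => ?_
    rw [sq, ← mul_assoc]
    exact mul_le_mul_of_nonneg_right (haσ k) (ha k)
  have hCS : (γ * ∑ k, σ k * (b k - a k)) ^ 2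
      ≤ (∑ k, a k ^ 2) * ∑ k, (b k - a k) ^ 2 := by
    rw [mul_sum]
    simp only [← mul_assoc, ← hmove]
    exact sum_mul_sq_le_sq_mul_sq univ a (fun k => b k - a k)
  rw [hinner, hnorm]
  exact sq_add_div_le_sq_div hγ
    (sum_nonneg fun k _ => mul_nonneg (hσ k) (sub_nonneg.mpr (hab k)))
    (sum_nonneg fun k _ => sq_nonneg _) hapos hGf hCS

/-- The vector `ε(γ)` of the paper. -/
def waterFilling {ι : Type*} (π σ : ι → ℝ) (γ : ℝ) (k : ι) : ℝ := min (π k) (γ * σ k)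

namespace waterFilling

variable {ι : Type*} {π σ : ι → ℝ}

lemma nonneg (hπ : ∀ k, 0 ≤ π k) (hσ : ∀ k, 0 ≤ σ k) {γ : ℝ} (hγ : 0 ≤ γ) (k : ι) :
    0 ≤ waterFilling π σ γ k :=
  le_min (hπ k) (mul_nonneg hγ (hσ k))

lemma pos (hπ : ∀ k, 0 < π k) (hσ : ∀ k, 0 < σ k) {γ : ℝ} (hγ : 0 < γ) (k : ι) :
    0 < waterFilling π σ γ k :=
  lt_min (hπ k) (mul_pos hγ (hσ k))

lemma le_mul (γ : ℝ) (k : ι) : waterFilling π σ γ k ≤ γ * σ k := min_le_right _ _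

lemma mono (hσ : ∀ k, 0 ≤ σ k) {γ₁ γ₂ : ℝ} (h : γ₁ ≤ γ₂) (k : ι) :
    waterFilling π σ γ₁ k ≤ waterFilling π σ γ₂ k :=
  min_le_min_left _ (mul_le_mul_of_nonneg_right h (hσ k))

/-- A coordinate that is capped at `π` at level `γ₁` stays capped at every higher level. -/
lemma mul_sub_eq (hσ : ∀ k, 0 ≤ σ k) {γ₁ γ₂ : ℝ} (h : γ₁ ≤ γ₂) (k : ι) :
    waterFilling π σ γ₁ k * (waterFilling π σ γ₂ k - waterFilling π σ γ₁ k)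
      = γ₁ * σ k * (waterFilling π σ γ₂ k - waterFilling π σ γ₁ k) := by
  unfold waterFilling
  rcases le_or_gt (γ₁ * σ k) (π k) with hfill | hcap
  · rw [min_eq_right hfill]
  · have hcap₂ : π k ≤ γ₂ * σ k := hcap.le.trans (mul_le_mul_of_nonneg_right h (hσ k))
    rw [min_eq_left hcap.le, min_eq_left hcap₂, sub_self, mul_zero, mul_zero]

variable [Fintype ι]

lemma sum_sq_mono (hπ : ∀ k, 0 ≤ π k) (hσ : ∀ k, 0 ≤ σ k) {γ₁ γ₂ : ℝ} (hγ₁ : 0 ≤ γ₁)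
    (h : γ₁ ≤ γ₂) : ∑ k, waterFilling π σ γ₁ k ^ 2 ≤ ∑ k, waterFilling π σ γ₂ k ^ 2 :=
  sum_le_sum fun k _ => pow_le_pow_left₀ (nonneg hπ hσ hγ₁ k) (mono hσ h k) 2

lemma sq_sum_mul_div_sum_sq_antitone [Nonempty ι] (hπ : ∀ k, 0 < π k) (hσ : ∀ k, 0 < σ k)
    {γ₁ γ₂ : ℝ} (hγ₁ : 0 < γ₁) (h : γ₁ ≤ γ₂) :
    (∑ k, σ k * waterFilling π σ γ₂ k) ^ 2 / ∑ k, waterFilling π σ γ₂ k ^ 2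
      ≤ (∑ k, σ k * waterFilling π σ γ₁ k) ^ 2 / ∑ k, waterFilling π σ γ₁ k ^ 2 :=
  sq_sum_mul_div_sum_sq_le hγ₁ (fun k => (hσ k).le) (nonneg (fun k => (hπ k).le)
    (fun k => (hσ k).le) hγ₁.le) (mono (fun k => (hσ k).le) h) (le_mul γ₁)
    (mul_sub_eq (fun k => (hσ k).le) h)
    (sum_pos (fun k _ => pow_pos (pos hπ hσ hγ₁ k) 2) univ_nonempty)

end waterFilling

theorem stmt_19_general (n : ℕ) (hn : 0 < n) (π σ : Fin n → ℝ)
    (hπpos : ∀ k, 0 < π k) (hσpos : ∀ k, 0 < σ k) :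
    have : Nonempty (Fin n) := Fin.pos_iff_nonempty.mp hn
    (∀ γ₁ γ₂ : ℝ, 0 < γ₁ → γ₁ ≤ γ₂ →
      Real.sqrt (∑ k, (min (π k) (γ₁ * σ k)) ^ 2)
        ≤ Real.sqrt (∑ k, (min (π k) (γ₂ * σ k)) ^ 2)) ∧
    (∀ γ₁ γ₂ : ℝ, (⨅ j, π j / σ j) ≤ γ₁ → γ₁ ≤ γ₂ → γ₂ ≤ (⨆ j, π j / σ j) →
      (∑ k, σ k * min (π k) (γ₂ * σ k)) ^ 2 / (∑ k, (min (π k) (γ₂ * σ k)) ^ 2)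
        ≤ (∑ k, σ k * min (π k) (γ₁ * σ k)) ^ 2 /
          (∑ k, (min (π k) (γ₁ * σ k)) ^ 2)) := by
  intro _
  refine ⟨fun γ₁ γ₂ hγ₁ h => Real.sqrt_le_sqrt ?_, fun γ₁ γ₂ hlow h _ => ?_⟩
  · exact waterFilling.sum_sq_mono (fun k => (hπpos k).le) (fun k => (hσpos k).le) hγ₁.le h
  · obtain ⟨i, hi⟩ := exists_eq_ciInf_of_finite (f := fun j => π j / σ j)
    have hγ₁ : 0 < γ₁ := (div_pos (hπpos i) (hσpos i)).trans_le (hi.trans_le hlow)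
    exact waterFilling.sq_sum_mul_div_sum_sq_antitone hπpos hσpos hγ₁ h

theorem stmt_19 (n : ℕ) (hn : 0 < n) (π σ : Fin n → ℝ)
    (hπ : ∑ k, (π k) ^ 2 = 1) (hσ : ∑ k, (σ k) ^ 2 = 1)
    (hπpos : ∀ k, 0 < π k) (hσpos : ∀ k, 0 < σ k) :
    have : Nonempty (Fin n) := Fin.pos_iff_nonempty.mp hn
    (∀ γ₁ γ₂ : ℝ, 0 < γ₁ → γ₁ ≤ γ₂ →
      Real.sqrt (∑ k, (min (π k) (γ₁ * σ k)) ^ 2)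
        ≤ Real.sqrt (∑ k, (min (π k) (γ₂ * σ k)) ^ 2)) ∧
    (∀ γ₁ γ₂ : ℝ, (⨅ j, π j / σ j) ≤ γ₁ → γ₁ ≤ γ₂ → γ₂ ≤ (⨆ j, π j / σ j) →
      (∑ k, σ k * min (π k) (γ₂ * σ k)) ^ 2 / (∑ k, (min (π k) (γ₂ * σ k)) ^ 2)
        ≤ (∑ k, σ k * min (π k) (γ₁ * σ k)) ^ 2 /
          (∑ k, (min (π k) (γ₁ * σ k)) ^ 2)) :=
  stmt_19_general n hn π σ hπpos hσpos
end
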